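/- Let (𝒞, 𝒟) be a complete cotorsion pair in an abelian category 𝔄. Then the following are equivalent: (i) (𝒞, 𝒟) is hereditary (both resolving and coresolving); (ii) 𝒞 is closed under kernels of epimorphisms between its members (resolving); (iii) 𝒟 is closed under cokernels of monomorphisms between its members (coresolving). -/
import Mathlib


open CategoryTheory CategoryTheory.Limits

universe v u

variable {A : Type u} [Category.{v} A] [Abelian A]

/-- `Ext¹(X, D) = 0`, expressed via extensions: every short exact sequence
`0 → D → E → X → 0` splits. -/
def Ext1Zero (X D : A) : Prop :=
  ∀ ⦃E : A⦄ (i : D ⟶ E) (π : E ⟶ X) (w : i ≫ π = 0),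
    (ShortComplex.mk i π w).ShortExact → ∃ s : X ⟶ E, s ≫ π = 𝟙 X

/-- `(𝒞, 𝒟)` is a cotorsion pair: `𝒞 = ^⊥𝒟` and `𝒟 = 𝒞^⊥` with respect to `Ext¹`. -/
def IsCotorsionPair (𝒞 𝒟 : Set A) : Prop :=
  (∀ X : A, X ∈ 𝒞 ↔ ∀ D ∈ 𝒟, Ext1Zero X D) ∧
  (∀ Y : A, Y ∈ 𝒟 ↔ ∀ X ∈ 𝒞, Ext1Zero X Y)

/-- A cotorsion pair `(𝒞, 𝒟)` is complete if every object `M` admits approximation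
sequences `0 → D → C → M → 0` and `0 → M → D' → C' → 0` with `C, C' ∈ 𝒞` and
`D, D' ∈ 𝒟`. -/
def IsCompleteCotorsionPair (𝒞 𝒟 : Set A) : Prop :=
  IsCotorsionPair 𝒞 𝒟 ∧
  (∀ M : A, ∃ (D X : A) (i : D ⟶ X) (π : X ⟶ M) (w : i ≫ π = 0),
      (ShortComplex.mk i π w).ShortExact ∧ X ∈ 𝒞 ∧ D ∈ 𝒟) ∧
  (∀ M : A, ∃ (D' X' : A) (i : M ⟶ D') (π : D' ⟶ X') (w : i ≫ π = 0),
      (ShortComplex.mk i π w).ShortExact ∧ X' ∈ 𝒞 ∧ D' ∈ 𝒟)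

/-- `𝒞` is resolving: closed under kernels of epimorphisms between its members. -/
def Resolving (𝒞 : Set A) : Prop :=
  ∀ ⦃X Y : A⦄ (f : X ⟶ Y), Epi f → X ∈ 𝒞 → Y ∈ 𝒞 → kernel f ∈ 𝒞

/-- `𝒟` is coresolving: closed under cokernels of monomorphisms between its members. -/
def Coresolving (𝒟 : Set A) : Prop :=
  ∀ ⦃X Y : A⦄ (f : X ⟶ Y), Mono f → X ∈ 𝒟 → Y ∈ 𝒟 → cokernel f ∈ 𝒟


section Aux

/-- Lifting lemma: given a short exact sequence `0 → D → E → Y → 0` and `Ext¹(X, D) = 0`,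
every map `X ⟶ Y` lifts along the epimorphism `E ⟶ Y`. -/
lemma lift_of_ext1Zero {D E Y X : A} (i : D ⟶ E) (p : E ⟶ Y) (w : i ≫ p = 0)
    (hS : (ShortComplex.mk i p w).ShortExact) (hext : Ext1Zero X D) (f : X ⟶ Y) :
    ∃ h : X ⟶ E, h ≫ p = f := by
  have hm : Mono i := hS.mono_f
  have he : Epi p := hS.epi_g
  let j : D ⟶ pullback p f := pullback.lift i 0 (by simp [w])
  have hj1 : j ≫ pullback.fst p f = i := pullback.lift_fst _ _ _
  have hj2 : j ≫ pullback.snd p f = 0 := pullback.lift_snd _ _ _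
  have hjm : Mono j := by
    have := hS.mono_f
    exact mono_of_mono_fac hj1
  have hker : IsLimit (KernelFork.ofι j hj2 :
      KernelFork (pullback.snd p f)) := by
    refine KernelFork.IsLimit.ofι' j hj2 (fun {T} t ht =>
      ⟨hS.exact.lift (t ≫ pullback.fst p f)
        (by rw [Category.assoc, pullback.condition, ← Category.assoc, ht, zero_comp]), ?_⟩)
    apply pullback.hom_ext
    · simp only [Category.assoc, hj1]
      exact hS.exact.lift_f _ _
    · simp only [Category.assoc, hj2, comp_zero, ht]
  have hSE : (ShortComplex.mk j (pullback.snd p f) hj2).ShortExact := by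
    refine ShortComplex.ShortExact.mk' ?_ hjm inferInstance
    exact ShortComplex.exact_of_f_is_kernel _ hker
  obtain ⟨s, hs⟩ := hext j (pullback.snd p f) hj2 hSE
  refine ⟨s ≫ pullback.fst p f, ?_⟩
  rw [Category.assoc, pullback.condition, ← Category.assoc, hs, Category.id_comp]

/-- Extension lemma: given a short exact sequence `0 → K → X → C → 0` and `Ext¹(C, D) = 0`,
every map `K ⟶ D` extends along the monomorphism `K ⟶ X`. -/
lemma extend_of_ext1Zero {K X C0 D : A} (j : K ⟶ X) (p : X ⟶ C0) (w : j ≫ p = 0)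
    (hS : (ShortComplex.mk j p w).ShortExact) (hext : Ext1Zero C0 D) (k : K ⟶ D) :
    ∃ m : X ⟶ D, j ≫ m = k := by
  have hm : Mono j := hS.mono_f
  have he : Epi p := hS.epi_g
  let c : pushout k j ⟶ C0 := pushout.desc 0 p (by simp [w])
  have hc1 : pushout.inl k j ≫ c = 0 := pushout.inl_desc _ _ _
  have hc2 : pushout.inr k j ≫ c = p := pushout.inr_desc _ _ _
  have hce : Epi c := by
    have := hS.epi_g
    exact epi_of_epi_fac hc2
  have hcm : Mono (pushout.inl k j) := Abelian.mono_pushout_of_mono_g _ _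
  have hcoker : IsColimit (CokernelCofork.ofπ c hc1 :
      CokernelCofork (pushout.inl k j)) := by
    refine CokernelCofork.IsColimit.ofπ' c hc1 (fun {T} t ht =>
      ⟨hS.exact.desc (pushout.inr k j ≫ t)
        (by rw [← Category.assoc, ← pushout.condition, Category.assoc, ht, comp_zero]), ?_⟩)
    apply pushout.hom_ext
    · rw [← Category.assoc, hc1, zero_comp, ht]
    · rw [← Category.assoc, hc2]
      exact hS.exact.g_desc _ _
  have hSE : (ShortComplex.mk (pushout.inl k j) c hc1).ShortExact := by
    refine ShortComplex.ShortExact.mk' ?_ hcm hce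
    exact ShortComplex.exact_of_g_is_cokernel _ hcoker
  obtain ⟨s, hs⟩ := hext (pushout.inl k j) c hc1 hSE
  let spl := ShortComplex.Splitting.ofExactOfSection _ hSE.exact s hs hcm
  refine ⟨pushout.inr k j ≫ spl.r, ?_⟩
  rw [← Category.assoc, ← pushout.condition, Category.assoc]
  have : pushout.inl k j ≫ spl.r = 𝟙 D := spl.f_r
  rw [this, Category.comp_id]

/-- If `(𝒞, 𝒟)` is a complete cotorsion pair and `𝒞` is resolving,
then `𝒟` is coresolving. -/
lemma coresolving_of_resolving {𝒞 𝒟 : Set A} (h : IsCompleteCotorsionPair 𝒞 𝒟)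
    (hR : Resolving 𝒞) : Coresolving 𝒟 := by
  intro D' D f hf hD' hD
  -- the short exact sequence 0 → D' → D → Y → 0 with Y = cokernel f
  have hfg : (ShortComplex.mk f (cokernel.π f) (cokernel.condition f)).ShortExact := by
    refine ShortComplex.ShortExact.mk' ?_ hf inferInstance
    exact ShortComplex.exact_of_g_is_cokernel _ (cokernelIsCokernel f)
  rw [h.1.2]
  intro C0 hC0 E i π w hξ
  have hmi : Mono i := hξ.mono_f
  have heπ : Epi π := hξ.epi_g
  -- completeness: 0 → D_E → X_E → E → 0 with X_E ∈ 𝒞, D_E ∈ 𝒟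
  obtain ⟨DE, XE, u, e, w₁, hSE, hXE, hDE⟩ := h.2.1 E
  have heu : Epi e := hSE.epi_g
  -- the composite epimorphism p : X_E ⟶ C0, with kernel L ∈ 𝒞 by resolving
  set p : XE ⟶ C0 := e ≫ π with hp
  have hep : Epi p := epi_comp _ _
  have hL𝒞 : kernel p ∈ 𝒞 := hR p hep hXE hC0
  set L := kernel p
  set ℓ : L ⟶ XE := kernel.ι p with hℓ
  have hwL : ℓ ≫ p = 0 := kernel.condition p
  have hLses : (ShortComplex.mk ℓ p hwL).ShortExact := by
    refine ShortComplex.ShortExact.mk' ?_ inferInstance hep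
    exact ShortComplex.exact_of_f_is_kernel _ (kernelIsKernel p)
  -- the induced map k : L ⟶ Y into the kernel of π
  have hk0 : (ℓ ≫ e) ≫ π = 0 := by rw [Category.assoc, ← hp, hwL]
  set k : L ⟶ cokernel f := hξ.exact.lift (ℓ ≫ e) hk0 with hkdef
  have hki : k ≫ i = ℓ ≫ e := hξ.exact.lift_f _ _
  -- lift k along D → Y (uses Ext¹(L, D') = 0)
  have hLD' : Ext1Zero L D' := (h.1.1 L).mp hL𝒞 D' hD'
  obtain ⟨k', hk'⟩ := lift_of_ext1Zero f (cokernel.π f) (cokernel.condition f) hfg hLD' k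
  -- extend k' along L → X_E (uses Ext¹(C0, D) = 0)
  have hCD : Ext1Zero C0 D := (h.1.2 D).mp hD C0 hC0
  obtain ⟨m', hm'⟩ := extend_of_ext1Zero ℓ p hwL hLses hCD k'
  set m : XE ⟶ cokernel f := m' ≫ cokernel.π f with hmdef
  have hmk : ℓ ≫ m = k := by rw [hmdef, ← Category.assoc, hm', hk']
  -- the splitting
  have hsplit0 : ℓ ≫ (e - m ≫ i) = 0 := by
    rw [Preadditive.comp_sub, ← Category.assoc, hmk, hki, sub_self]
  refine ⟨hLses.exact.desc (e - m ≫ i) hsplit0, ?_⟩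
  have hdesc : p ≫ hLses.exact.desc (e - m ≫ i) hsplit0 = e - m ≫ i :=
    hLses.exact.g_desc _ _
  rw [← cancel_epi p, ← Category.assoc, hdesc, Preadditive.sub_comp, Category.assoc, w,
    comp_zero, sub_zero, Category.comp_id, hp]

/-- If `(𝒞, 𝒟)` is a complete cotorsion pair and `𝒟` is coresolving,
then `𝒞` is resolving. -/
lemma resolving_of_coresolving {𝒞 𝒟 : Set A} (h : IsCompleteCotorsionPair 𝒞 𝒟)
    (hCo : Coresolving 𝒟) : Resolving 𝒞 := by
  intro X Y f hf hX hY
  -- the short exact sequence 0 → K → X → Y → 0 with K = kernel f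
  have hK : (ShortComplex.mk (kernel.ι f) f (kernel.condition f)).ShortExact := by
    refine ShortComplex.ShortExact.mk' ?_ inferInstance hf
    exact ShortComplex.exact_of_f_is_kernel _ (kernelIsKernel f)
  rw [h.1.1]
  intro D hD E i π w hξ
  have hmi : Mono i := hξ.mono_f
  have heπ : Epi π := hξ.epi_g
  -- completeness: 0 → E → D_E → X_E → 0 with X_E ∈ 𝒞, D_E ∈ 𝒟
  obtain ⟨DE, XE, u, v, w₂, hSE, hXE, hDE⟩ := h.2.2 E
  have hmu : Mono u := hSE.mono_f
  -- the composite monomorphism m₀ : D ⟶ D_E, with cokernel M ∈ 𝒟 by coresolving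
  set m₀ : D ⟶ DE := i ≫ u with hm₀
  have hmm : Mono m₀ := mono_comp _ _
  have hM𝒟 : cokernel m₀ ∈ 𝒟 := hCo m₀ hmm hD hDE
  set c : DE ⟶ cokernel m₀ := cokernel.π m₀ with hc
  have hwM : m₀ ≫ c = 0 := cokernel.condition m₀
  have hMses : (ShortComplex.mk m₀ c hwM).ShortExact := by
    refine ShortComplex.ShortExact.mk' ?_ hmm inferInstance
    exact ShortComplex.exact_of_g_is_cokernel _ (cokernelIsCokernel m₀)
  -- the induced map k : K ⟶ M from the cokernel of i
  have hk0 : i ≫ (u ≫ c) = 0 := by rw [← Category.assoc, ← hm₀, hwM]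
  set k : kernel f ⟶ cokernel m₀ := hξ.exact.desc (u ≫ c) hk0 with hkdef
  have hπk : π ≫ k = u ≫ c := hξ.exact.g_desc _ _
  -- extend k along K → X (uses Ext¹(Y, M) = 0)
  have hYM : Ext1Zero Y (cokernel m₀) := (h.1.2 (cokernel m₀)).mp hM𝒟 Y hY
  obtain ⟨k₁, hk₁⟩ := extend_of_ext1Zero (kernel.ι f) f (kernel.condition f) hK hYM k
  -- lift k₁ along D_E → M (uses Ext¹(X, D) = 0)
  have hXD : Ext1Zero X D := (h.1.1 X).mp hX D hD
  obtain ⟨k₂, hk₂⟩ := lift_of_ext1Zero m₀ c hwM hMses hXD k₁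
  set m : kernel f ⟶ DE := kernel.ι f ≫ k₂ with hmdef
  have hmc : m ≫ c = k := by rw [hmdef, Category.assoc, hk₂, hk₁]
  -- obtain a retraction of i
  have hr0 : (u - π ≫ m) ≫ c = 0 := by
    rw [Preadditive.sub_comp, Category.assoc, hmc, hπk, sub_self]
  set r : E ⟶ D := hMses.exact.lift (u - π ≫ m) hr0 with hrdef
  have hrm : r ≫ m₀ = u - π ≫ m := hMses.exact.lift_f _ _
  have hir : i ≫ r = 𝟙 D := by
    rw [← cancel_mono m₀, Category.assoc, hrm, Preadditive.comp_sub, ← hm₀,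
      ← Category.assoc, w, zero_comp, sub_zero, Category.id_comp]
  let spl := ShortComplex.Splitting.ofExactOfRetraction _ hξ.exact r hir heπ
  exact ⟨spl.s, spl.s_g⟩

end Aux

/-- For a complete cotorsion pair `(𝒞, 𝒟)`, the following are equivalent:
(i) the pair is hereditary (both resolving and coresolving); (ii) `𝒞` is resolving;
(iii) `𝒟` is coresolving. -/
theorem stmt19 (𝒞 𝒟 : Set A) (h : IsCompleteCotorsionPair 𝒞 𝒟) :
    ((Resolving 𝒞 ∧ Coresolving 𝒟) ↔ Resolving 𝒞) ∧
    ((Resolving 𝒞 ∧ Coresolving 𝒟) ↔ Coresolving 𝒟) :=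
  ⟨⟨fun h' => h'.1, fun hR => ⟨hR, coresolving_of_resolving h hR⟩⟩,
   ⟨fun h' => h'.2, fun hC => ⟨resolving_of_coresolving h hC, hC⟩⟩⟩
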